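/- arXiv:0911.5524 — 3 statements merged into one kernel-verified Lean document; each statement's English description precedes it below -/
import Mathlib

section
/- Let A be an n×m matrix, T and Δ disjoint index sets with δ_{|T|} < 1. Define β_T = −(A_T'A_T)^{-1} A_T'(A_Δ x_Δ + w). Then ||β_T||^2 ≤ 2 θ_{|T|,|Δ|}^2/(1−δ_{|T|})^2 · ||x_Δ||^2 + 2/(1−δ_{|T|}) · ||w||^2. -/
/-!
With `B = A_T`, the vector `β` solves the normal equations `BᵀB β = -Bᵀ(A_Δ x_Δ + w)` (the lower
RIP bound makes `BᵀB` positive definite, hence invertible). Pairing them with `β` gives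
`‖Bβ‖² = -⟪Bβ, A_Δ x_Δ⟫ - ⟪Bβ, w⟫ ≤ θ ‖β‖ ‖x_Δ‖ + ‖Bβ‖ ‖w‖` by restricted orthogonality and
Cauchy–Schwarz. Together with `√(1-δ) ‖β‖ ≤ ‖Bβ‖` this yields
`‖β‖ ≤ θ ‖x_Δ‖ / (1-δ) + ‖w‖ / √(1-δ)`, and `(a + b)² ≤ 2a² + 2b²` finishes.
-/

open Matrix Function

section extend

variable {R ι κ : Type*} [Fintype ι] [Fintype κ]

lemma Fintype.sum_mul_extend_zero [NonUnitalNonAssocSemiring R] {e : ι → κ} (he : Injective e)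
    (g : κ → R) (c : ι → R) : ∑ k, g k * extend e c 0 k = ∑ i, g (e i) * c i :=
  (Fintype.sum_of_injective e he _ _
    (fun k hk => by rw [extend_apply' _ _ _ hk, Pi.zero_apply, mul_zero])
    (fun i => by rw [he.extend_apply])).symm

lemma Matrix.mulVec_extend_zero [NonUnitalNonAssocSemiring R] {m : Type*} {e : ι → κ}
    (he : Injective e) (A : Matrix m κ R) (c : ι → R) :
    A *ᵥ extend e c 0 = A.submatrix id e *ᵥ c :=
  funext fun j => Fintype.sum_mul_extend_zero he (A j) c

lemma Matrix.extend_zero_dotProduct_self [NonUnitalNonAssocSemiring R] {e : ι → κ}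
    (he : Injective e) (c : ι → R) : extend e c 0 ⬝ᵥ extend e c 0 = c ⬝ᵥ c := by
  rw [dotProduct, Fintype.sum_mul_extend_zero he, dotProduct]
  exact Finset.sum_congr rfl fun i _ => by rw [he.extend_apply]

end extend

lemma Matrix.dotProduct_self_nonneg {R ι : Type*} [Fintype ι] [Ring R] [LinearOrder R]
    [IsStrictOrderedRing R] (v : ι → R) : 0 ≤ v ⬝ᵥ v :=
  Finset.sum_nonneg fun i _ => mul_self_nonneg (v i)

lemma Matrix.mulVec_injective_of_lower_bound {R m ι : Type*} [Fintype m] [Fintype ι] [Ring R]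
    [LinearOrder R] [IsStrictOrderedRing R] {B : Matrix m ι R} {ε : R} (hε : 0 < ε) (hB : ∀ c, ε * (c ⬝ᵥ c) ≤ B *ᵥ c ⬝ᵥ B *ᵥ c) : Injective B.mulVec := by
  intro c d hcd
  have h := hB (c - d)
  rw [mulVec_sub, hcd, sub_self, zero_dotProduct] at h
  have h0 : (c - d) ⬝ᵥ (c - d) = 0 :=
    le_antisymm (nonpos_of_mul_nonpos_right h hε) (dotProduct_self_nonneg _)
  exact sub_eq_zero.mp (dotProduct_self_eq_zero.mp h0)

lemma le_abs_div_sq_add_div_of_sq_le {r b s t W : ℝ} (hr : 0 < r) (hb : 0 ≤ b) (hW : 0 ≤ W)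
    (hrb : r * b ≤ s) (hs : s ^ 2 ≤ t * b + s * W) : b ≤ |t| / r ^ 2 + W / r := by
  have hs0 : 0 ≤ s := (mul_nonneg hr.le hb).trans hrb
  have hbs : b ≤ s / r := by rwa [le_div_iff₀ hr, mul_comm]
  have hsK : s * s ≤ s * (|t| / r + W) :=
    calc s * s = s ^ 2 := (sq s).symm
      _ ≤ |t| * b + s * W := hs.trans (by gcongr; exact le_abs_self t)
      _ ≤ |t| * (s / r) + s * W := by gcongr
      _ = s * (|t| / r + W) := by ring
  have hs' : s ≤ |t| / r + W := by
    rcases hs0.eq_or_lt with rfl | hpos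
    · positivity
    · exact le_of_mul_le_mul_left hsK hpos
  calc b ≤ s / r := hbs
    _ ≤ (|t| / r + W) / r := by gcongr
    _ = |t| / r ^ 2 + W / r := by field_simp

theorem leastSquares_dotProduct_self_le {m ι κ : Type*} [Fintype m] [Fintype ι] [DecidableEq ι]
    [Fintype κ] (B : Matrix m ι ℝ) (C : Matrix m κ ℝ) (y : κ → ℝ) (w : m → ℝ) {δ θ : ℝ}
    (hδ : δ < 1) (hRIP : ∀ c, (1 - δ) * (c ⬝ᵥ c) ≤ B *ᵥ c ⬝ᵥ B *ᵥ c)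
    (hRO : ∀ c₁ c₂, |B *ᵥ c₁ ⬝ᵥ C *ᵥ c₂| ≤ θ * √(c₁ ⬝ᵥ c₁) * √(c₂ ⬝ᵥ c₂))
    {β : ι → ℝ} (hβ : β = -((Bᵀ * B)⁻¹ *ᵥ (Bᵀ *ᵥ (C *ᵥ y + w)))) :
    β ⬝ᵥ β ≤ 2 * θ ^ 2 / (1 - δ) ^ 2 * (y ⬝ᵥ y) + 2 / (1 - δ) * (w ⬝ᵥ w) := by
  have hε : 0 < 1 - δ := by linarith
  have hG : IsUnit (Bᵀ * B) := by
    simpa only [conjTranspose_eq_transpose_of_trivial] using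
      (PosDef.conjTranspose_mul_self B (mulVec_injective_of_lower_bound hε hRIP)).isUnit
  have hGβ : (Bᵀ * B) *ᵥ β = -(Bᵀ *ᵥ (C *ᵥ y + w)) := by
    rw [hβ, mulVec_neg, mulVec_mulVec, mul_nonsing_inv _ ((isUnit_iff_isUnit_det _).mp hG),
      one_mulVec]
  set u := B *ᵥ β
  have hu : u ⬝ᵥ u = -(u ⬝ᵥ C *ᵥ y) - u ⬝ᵥ w := by
    calc u ⬝ᵥ u = β ⬝ᵥ (Bᵀ * B) *ᵥ β := by
          rw [← mulVec_mulVec, dotProduct_mulVec β, vecMul_transpose]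
      _ = -(u ⬝ᵥ C *ᵥ y) - u ⬝ᵥ w := by
          rw [hGβ, dotProduct_neg, dotProduct_mulVec, vecMul_transpose, dotProduct_add]; ring
  have hCS : -(u ⬝ᵥ w) ≤ √(u ⬝ᵥ u) * √(w ⬝ᵥ w) := by
    have h := Real.sum_mul_le_sqrt_mul_sqrt Finset.univ u (-w)
    simp only [Pi.neg_apply, neg_sq, mul_neg, Finset.sum_neg_distrib] at h
    simpa only [dotProduct, sq] using h
  have hs : √(u ⬝ᵥ u) ^ 2 ≤ θ * √(y ⬝ᵥ y) * √(β ⬝ᵥ β) + √(u ⬝ᵥ u) * √(w ⬝ᵥ w) := by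
    rw [Real.sq_sqrt (dotProduct_self_nonneg u)]
    linarith [neg_le_of_abs_le (hRO β y)]
  have hrb : √(1 - δ) * √(β ⬝ᵥ β) ≤ √(u ⬝ᵥ u) := by
    rw [← Real.sqrt_mul hε.le]; exact Real.sqrt_le_sqrt (hRIP β)
  have hb := le_abs_div_sq_add_div_of_sq_le (Real.sqrt_pos.2 hε) (Real.sqrt_nonneg _)
    (Real.sqrt_nonneg _) hrb hs
  calc β ⬝ᵥ β = √(β ⬝ᵥ β) ^ 2 := (Real.sq_sqrt (dotProduct_self_nonneg β)).symm
    _ ≤ (|θ * √(y ⬝ᵥ y)| / √(1 - δ) ^ 2 + √(w ⬝ᵥ w) / √(1 - δ)) ^ 2 := by gcongr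
    _ ≤ 2 * ((|θ * √(y ⬝ᵥ y)| / √(1 - δ) ^ 2) ^ 2 + (√(w ⬝ᵥ w) / √(1 - δ)) ^ 2) := add_sq_le
    _ = 2 * θ ^ 2 / (1 - δ) ^ 2 * (y ⬝ᵥ y) + 2 / (1 - δ) * (w ⬝ᵥ w) := by
      rw [div_pow, div_pow, sq_abs, mul_pow, Real.sq_sqrt hε.le,
        Real.sq_sqrt (dotProduct_self_nonneg y), Real.sq_sqrt (dotProduct_self_nonneg w)]
      ring

theorem stmt_6_general {n m : ℕ} (A : Matrix (Fin n) (Fin m) ℝ)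
    (T Δ : Finset (Fin m))
    (x : Fin m → ℝ) (w : Fin n → ℝ) (δ θ : ℝ) (hδ : δ < 1)
    -- δ is (an upper bound on) the restricted isometry constant of order |T|
    (hRIP : ∀ c : Fin m → ℝ, (∀ i, c i ≠ 0 → i ∈ T) →
      (1 - δ) * ∑ i, (c i) ^ 2 ≤ ∑ j, (∑ i, A j i * c i) ^ 2 ∧
      ∑ j, (∑ i, A j i * c i) ^ 2 ≤ (1 + δ) * ∑ i, (c i) ^ 2)
    -- θ is (an upper bound on) the restricted orthogonality constant for (|T|,|Δ|)
    (hRO : ∀ (c₁ : T → ℝ) (c₂ : Δ → ℝ),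
      |∑ i : T, c₁ i * ∑ k : Δ, (∑ j, A j (i : Fin m) * A j (k : Fin m)) * c₂ k|
        ≤ θ * Real.sqrt (∑ i, (c₁ i) ^ 2) * Real.sqrt (∑ k, (c₂ k) ^ 2))
    (β : T → ℝ)
    (hβ : β = -(Matrix.of (fun i k : T => ∑ j, A j (i : Fin m) * A j (k : Fin m)))⁻¹.mulVec
      (fun i : T => ∑ j, A j (i : Fin m) * ((∑ k ∈ Δ, A j k * x k) + w j))) :
    ∑ i, (β i) ^ 2 ≤
      2 * θ ^ 2 / (1 - δ) ^ 2 * ∑ k ∈ Δ, (x k) ^ 2 + 2 / (1 - δ) * ∑ j, (w j) ^ 2 := by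
  set B := A.submatrix id ((↑) : T → Fin m)
  set C := A.submatrix id ((↑) : Δ → Fin m)
  have hRIP' : ∀ c, (1 - δ) * (c ⬝ᵥ c) ≤ B *ᵥ c ⬝ᵥ B *ᵥ c := by
    intro c
    have hsupp : ∀ i, extend Subtype.val c 0 i ≠ 0 → i ∈ T := fun i hi => by
      obtain ⟨j, -, rfl⟩ := support_extend_zero_subset hi
      exact j.2
    rw [← mulVec_extend_zero Subtype.val_injective,
      ← extend_zero_dotProduct_self Subtype.val_injective]
    have h := (hRIP _ hsupp).1
    simp only [sq] at h
    exact h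
  have hRO' : ∀ c₁ c₂, |B *ᵥ c₁ ⬝ᵥ C *ᵥ c₂| ≤ θ * √(c₁ ⬝ᵥ c₁) * √(c₂ ⬝ᵥ c₂) := by
    intro c₁ c₂
    rw [← vecMul_transpose, ← dotProduct_mulVec, mulVec_mulVec]
    -- `hRO` is this inequality with `Bᵀ * C` and the dot products unfolded into sums
    have h := hRO c₁ c₂
    simp only [sq] at h
    exact h
  have hCx : C *ᵥ (fun k : Δ => x k) = fun j => ∑ k ∈ Δ, A j k * x k :=
    funext fun j => Finset.sum_coe_sort Δ (fun k => A j k * x k)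
  have hβ' : β = -((Bᵀ * B)⁻¹ *ᵥ (Bᵀ *ᵥ (C *ᵥ (fun k : Δ => x k) + w))) := by
    rw [hCx]; exact hβ
  simpa only [dotProduct, ← sq, Finset.sum_coe_sort Δ (fun k => x k ^ 2)] using
    leastSquares_dotProduct_self_le B C _ w hδ hRIP' hRO' hβ'

/-- Bound on the "compressible" part β_T = -(A_T'A_T)⁻¹ A_T'(A_Δ x_Δ + w). -/
theorem stmt_6 {n m : ℕ} (A : Matrix (Fin n) (Fin m) ℝ)
    (T Δ : Finset (Fin m)) (hdisj : Disjoint T Δ)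
    (x : Fin m → ℝ) (w : Fin n → ℝ) (δ θ : ℝ) (hδ : δ < 1) (hδ0 : 0 ≤ δ) (hθ : 0 ≤ θ)
    -- δ is (an upper bound on) the restricted isometry constant of order |T|
    (hRIP : ∀ c : Fin m → ℝ, (∀ i, c i ≠ 0 → i ∈ T) →
      (1 - δ) * ∑ i, (c i) ^ 2 ≤ ∑ j, (∑ i, A j i * c i) ^ 2 ∧
      ∑ j, (∑ i, A j i * c i) ^ 2 ≤ (1 + δ) * ∑ i, (c i) ^ 2)
    -- θ is (an upper bound on) the restricted orthogonality constant for (|T|,|Δ|)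
    (hRO : ∀ (c₁ : T → ℝ) (c₂ : Δ → ℝ),
      |∑ i : T, c₁ i * ∑ k : Δ, (∑ j, A j (i : Fin m) * A j (k : Fin m)) * c₂ k|
        ≤ θ * Real.sqrt (∑ i, (c₁ i) ^ 2) * Real.sqrt (∑ k, (c₂ k) ^ 2))
    (β : T → ℝ)
    (hβ : β = -(Matrix.of (fun i k : T => ∑ j, A j (i : Fin m) * A j (k : Fin m)))⁻¹.mulVec
      (fun i : T => ∑ j, A j (i : Fin m) * ((∑ k ∈ Δ, A j k * x k) + w j))) :
    ∑ i, (β i) ^ 2 ≤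
      2 * θ ^ 2 / (1 - δ) ^ 2 * ∑ k ∈ Δ, (x k) ^ 2 + 2 / (1 - δ) * ∑ j, (w j) ^ 2 :=
  stmt_6_general A T Δ x w δ θ hδ hRIP hRO β hβ
end

section
/- Let A be an n×m matrix with δ_{|T|} ≤ 1/2 for an index set T, let Δ be disjoint from T, and suppose the observation is y = A_T x_T + A_Δ x_Δ + w with ||w||_∞ ≤ λ/||A||_1. Let x̂_T = (A_T'A_T)^{-1}A_T' y be the least-squares estimate on T. Then ||x_T − x̂_T||_2^2 ≤ 4nλ^2/||A||_1^2 + 8 θ_{|T|,|Δ|}^2 ||x_Δ||_2^2. -/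
/-- Genie-aided LS error bound: ‖x_T - x̂_T‖² ≤ 4nλ²/‖A‖₁² + 8θ²‖x_Δ‖². -/
theorem stmt_11 {n m : ℕ} (A : Matrix (Fin n) (Fin m) ℝ)
    (T Δ : Finset (Fin m)) (hdisj : Disjoint T Δ)
    (x : Fin m → ℝ) (hxsupp : ∀ i, x i ≠ 0 → i ∈ T ∪ Δ)
    (w y : Fin n → ℝ) (hy : y = fun j => (∑ i, A j i * x i) + w j)
    (normA lam δ θ : ℝ) (hnormA : 0 < normA) (hlam : 0 ≤ lam) (hθ : 0 ≤ θ)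
    (hδ0 : 0 ≤ δ) (hδ : δ ≤ 1 / 2)
    -- δ bounds the restricted isometry constant of order |T|
    (hRIP : ∀ c : Fin m → ℝ, (∀ i, c i ≠ 0 → i ∈ T) →
      (1 - δ) * ∑ i, (c i) ^ 2 ≤ ∑ j, (∑ i, A j i * c i) ^ 2 ∧
      ∑ j, (∑ i, A j i * c i) ^ 2 ≤ (1 + δ) * ∑ i, (c i) ^ 2)
    -- θ bounds the restricted orthogonality constant for (|T|,|Δ|)
    (hRO : ∀ (c₁ : T → ℝ) (c₂ : Δ → ℝ),
      |∑ i : T, c₁ i * ∑ k : Δ, (∑ j, A j (i : Fin m) * A j (k : Fin m)) * c₂ k|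
        ≤ θ * Real.sqrt (∑ i, (c₁ i) ^ 2) * Real.sqrt (∑ k, (c₂ k) ^ 2))
    (hw : ∀ j, |w j| ≤ lam / normA)
    (xhat : T → ℝ)
    (hxhat : xhat = (Matrix.of (fun i k : T => ∑ j, A j (i : Fin m) * A j (k : Fin m)))⁻¹.mulVec
      (fun i : T => ∑ j, A j (i : Fin m) * y j)) :
    ∑ i : T, (x (i : Fin m) - xhat i) ^ 2 ≤
      4 * n * lam ^ 2 / normA ^ 2 + 8 * θ ^ 2 * ∑ k ∈ Δ, (x k) ^ 2 := by
  classical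
  subst hy
  set G : Matrix T T ℝ :=
    Matrix.of (fun i k : T => ∑ j, A j (i : Fin m) * A j (k : Fin m)) with hGdef
  -- quadratic form identity
  have quad : ∀ c : T → ℝ,
      ∑ i : T, c i * G.mulVec c i = ∑ j, (∑ i : T, A j (i : Fin m) * c i) ^ 2 := by
    intro c
    simp only [hGdef, Matrix.mulVec, dotProduct, Matrix.of_apply, Finset.mul_sum,
      Finset.sum_mul, sq]
    rw [Finset.sum_comm]
    have hsw : ∀ y : T, ∑ x : T, ∑ j, c x * (A j (x : Fin m) * A j (y : Fin m) * c y)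
        = ∑ j, ∑ x : T, c x * (A j (x : Fin m) * A j (y : Fin m) * c y) :=
      fun y => Finset.sum_comm
    simp_rw [hsw]
    rw [Finset.sum_comm]
    exact Finset.sum_congr rfl fun j _ => Finset.sum_congr rfl fun y _ =>
      Finset.sum_congr rfl fun z _ => by ring
  -- RIP for subtype vectors
  have hRIP' : ∀ c : T → ℝ,
      (1 - δ) * ∑ i : T, (c i) ^ 2 ≤ ∑ j, (∑ i : T, A j (i : Fin m) * c i) ^ 2 := by
    intro c
    set c' : Fin m → ℝ := fun i => if h : i ∈ T then c ⟨i, h⟩ else 0 with hc'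
    have hsupp : ∀ i, c' i ≠ 0 → i ∈ T := by
      intro i h
      by_contra hi
      simp [hc', hi] at h
    have h1 : ∀ j, ∑ i, A j i * c' i = ∑ i : T, A j (i : Fin m) * c i := by
      intro j
      rw [← Finset.sum_subset (Finset.subset_univ T)
        (fun i _ hi => by simp [hc', hi]), ← Finset.sum_coe_sort T (fun i => A j i * c' i)]
      exact Finset.sum_congr rfl fun i _ => by simp [hc']
    have h2 : ∑ i, (c' i) ^ 2 = ∑ i : T, (c i) ^ 2 := by
      rw [← Finset.sum_subset (Finset.subset_univ T)
        (fun i _ hi => by simp [hc', hi]), ← Finset.sum_coe_sort T (fun i => (c' i) ^ 2)]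
      exact Finset.sum_congr rfl fun i _ => by simp [hc']
    have := (hRIP c' hsupp).1
    simp_rw [h1, h2] at this
    exact this
  -- G is invertible
  have hGdet : IsUnit G.det := by
    rw [isUnit_iff_ne_zero]
    intro h0
    obtain ⟨c, hc0, hc⟩ := Matrix.exists_mulVec_eq_zero_iff.mpr h0
    have hq := quad c
    rw [hc] at hq
    simp only [Pi.zero_apply, mul_zero, Finset.sum_const_zero] at hq
    have h1 := hRIP' c
    rw [← hq] at h1
    have hsum : ∑ i : T, (c i) ^ 2 = 0 := by
      have hnn : (0:ℝ) ≤ ∑ i : T, (c i) ^ 2 := Finset.sum_nonneg fun i _ => sq_nonneg _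
      nlinarith
    have : ∀ i : T, c i = 0 := by
      intro i
      have := (Finset.sum_eq_zero_iff_of_nonneg (fun i _ => sq_nonneg (c i))).mp hsum i
        (Finset.mem_univ i)
      exact pow_eq_zero_iff (by norm_num) |>.mp this
    exact hc0 (funext this)
  -- decomposition of the estimate
  set xT : T → ℝ := fun i => x i with hxT
  set u : Fin n → ℝ := fun j => ∑ k ∈ Δ, A j k * x k with hu
  set v₁ : T → ℝ := fun i => ∑ j, A j (i : Fin m) * u j with hv₁
  set v₂ : T → ℝ := fun i => ∑ j, A j (i : Fin m) * w j with hv₂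
  have hxsplit : ∀ j, ∑ i, A j i * x i = (∑ k ∈ T, A j k * x k) + ∑ k ∈ Δ, A j k * x k := by
    intro j
    rw [← Finset.sum_union hdisj]
    exact (Finset.sum_subset (Finset.subset_univ _) fun i _ hi => by
      have hx0 : x i = 0 := by by_contra h; exact hi (hxsupp i h)
      simp [hx0]).symm
  have hGxT : ∀ i : T, G.mulVec xT i = ∑ j, A j (i : Fin m) * ∑ k ∈ T, A j k * x k := by
    intro i
    have hj : ∀ j, A j (i : Fin m) * ∑ k ∈ T, A j k * x k
        = ∑ k : T, A j (i : Fin m) * (A j (k : Fin m) * x (k : Fin m)) := by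
      intro j
      rw [Finset.mul_sum, ← Finset.sum_coe_sort T (fun k => A j (i : Fin m) * (A j k * x k))]
    simp_rw [hj]
    rw [Finset.sum_comm]
    simp only [hGdef, Matrix.mulVec, dotProduct, Matrix.of_apply]
    exact Finset.sum_congr rfl fun k _ => by
      rw [Finset.sum_mul]
      exact Finset.sum_congr rfl fun j _ => by simp [hxT]; ring
  have hb : (fun i : T => ∑ j, A j (i : Fin m) * ((∑ i', A j i' * x i') + w j))
      = G.mulVec xT + (v₁ + v₂) := by
    funext i
    have hj : ∀ j, A j (i : Fin m) * ((∑ i', A j i' * x i') + w j)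
        = A j (i : Fin m) * ∑ k ∈ T, A j k * x k
          + (A j (i : Fin m) * u j + A j (i : Fin m) * w j) := by
      intro j; rw [hxsplit j, hu]; ring
    simp only [hj, Finset.sum_add_distrib, Pi.add_apply]
    rw [hGxT i]
  have hxhat' : xhat = xT + (G⁻¹.mulVec v₁ + G⁻¹.mulVec v₂) := by
    beta_reduce at hxhat
    rw [hxhat, hb, Matrix.mulVec_add, Matrix.mulVec_add, Matrix.mulVec_mulVec,
      Matrix.nonsing_inv_mul G hGdet, Matrix.one_mulVec]
  set e₁ : T → ℝ := -(G⁻¹.mulVec v₁) with he₁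
  set e₂ : T → ℝ := -(G⁻¹.mulVec v₂) with he₂
  have hGe : ∀ v : T → ℝ, G.mulVec (-(G⁻¹.mulVec v)) = -v := by
    intro v
    rw [Matrix.mulVec_neg, Matrix.mulVec_mulVec, Matrix.mul_nonsing_inv G hGdet,
      Matrix.one_mulVec]
  have herr : ∀ i : T, x (i : Fin m) - xhat i = e₁ i + e₂ i := by
    intro i
    rw [hxhat']
    simp only [Pi.add_apply, he₁, he₂, hxT, Pi.neg_apply]
    ring
  -- quantities
  set N₁ := ∑ i : T, (e₁ i) ^ 2 with hN₁
  set N₂ := ∑ i : T, (e₂ i) ^ 2 with hN₂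
  set D := ∑ k ∈ Δ, (x k) ^ 2 with hD
  set W := ∑ j, (w j) ^ 2 with hW
  have hN₁0 : 0 ≤ N₁ := Finset.sum_nonneg fun i _ => sq_nonneg _
  have hN₂0 : 0 ≤ N₂ := Finset.sum_nonneg fun i _ => sq_nonneg _
  have hD0 : 0 ≤ D := Finset.sum_nonneg fun i _ => sq_nonneg _
  have hW0 : 0 ≤ W := Finset.sum_nonneg fun i _ => sq_nonneg _
  -- quadratic form identities for e₁, e₂
  have hq1 : ∑ j, (∑ i : T, A j (i : Fin m) * e₁ i) ^ 2 = -∑ i : T, e₁ i * v₁ i := by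
    rw [← quad e₁, show G.mulVec e₁ = -v₁ from hGe v₁]
    simp [mul_neg]
  have hq2 : ∑ j, (∑ i : T, A j (i : Fin m) * e₂ i) ^ 2 = -∑ i : T, e₂ i * v₂ i := by
    rw [← quad e₂, show G.mulVec e₂ = -v₂ from hGe v₂]
    simp [mul_neg]
  -- bound for e₁ using restricted orthogonality
  have hinner1 : ∑ i : T, e₁ i * v₁ i
      = ∑ i : T, e₁ i * ∑ k : Δ, (∑ j, A j (i : Fin m) * A j (k : Fin m)) * x (k : Fin m) := by
    refine Finset.sum_congr rfl fun i _ => ?_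
    congr 1
    have hj : ∀ j, A j (i : Fin m) * u j
        = ∑ k : Δ, A j (i : Fin m) * (A j (k : Fin m) * x (k : Fin m)) := by
      intro j
      rw [hu, Finset.mul_sum, ← Finset.sum_coe_sort Δ (fun k => A j (i : Fin m) * (A j k * x k))]
    show ∑ j, A j (i : Fin m) * u j = _
    simp_rw [hj]
    rw [Finset.sum_comm]
    exact Finset.sum_congr rfl fun k _ => by
      rw [Finset.sum_mul]
      exact Finset.sum_congr rfl fun j _ => by ring
  have hb1 : (1 - δ) * N₁ ≤ θ * Real.sqrt N₁ * Real.sqrt D := by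
    have h1 := hRIP' e₁
    rw [hq1] at h1
    have h2 := hRO e₁ (fun k => x (k : Fin m))
    rw [← hinner1] at h2
    have hDc : ∑ k : Δ, (x (k : Fin m)) ^ 2 = D := Finset.sum_coe_sort Δ (fun k => (x k) ^ 2)
    rw [hDc] at h2
    calc (1 - δ) * N₁ ≤ -∑ i : T, e₁ i * v₁ i := h1
      _ ≤ |∑ i : T, e₁ i * v₁ i| := neg_le_abs _
      _ ≤ θ * Real.sqrt N₁ * Real.sqrt D := h2
  have hN₁D : N₁ ≤ 4 * θ ^ 2 * D := by
    have hs1 : Real.sqrt N₁ ^ 2 = N₁ := Real.sq_sqrt hN₁0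
    have hs2 : Real.sqrt D ^ 2 = D := Real.sq_sqrt hD0
    nlinarith [sq_nonneg (Real.sqrt N₁ - 2 * θ * Real.sqrt D), Real.sqrt_nonneg N₁,
      Real.sqrt_nonneg D, hb1]
  -- bound for e₂ using Cauchy–Schwarz
  have hfw : ∑ i : T, e₂ i * v₂ i = ∑ j, (∑ i : T, A j (i : Fin m) * e₂ i) * w j := by
    simp_rw [hv₂, Finset.mul_sum]
    rw [Finset.sum_comm]
    exact Finset.sum_congr rfl fun j _ => by
      rw [Finset.sum_mul]
      exact Finset.sum_congr rfl fun i _ => by ring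
  have hCS : (∑ j, (∑ i : T, A j (i : Fin m) * e₂ i) * w j) ^ 2
      ≤ (∑ j, (∑ i : T, A j (i : Fin m) * e₂ i) ^ 2) * W := by
    have h := Finset.sum_mul_sq_le_sq_mul_sq Finset.univ
      (fun j => ∑ i : T, A j (i : Fin m) * e₂ i) w
    simpa using h
  set q := ∑ j, (∑ i : T, A j (i : Fin m) * e₂ i) ^ 2 with hq
  have hq0 : 0 ≤ q := by rw [hq]; exact Finset.sum_nonneg fun j _ => sq_nonneg _
  have hsum : (∑ j, (∑ i : T, A j (i : Fin m) * e₂ i) * w j) = -q := by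
    rw [hq2, hfw]; ring
  have hCS' : q ^ 2 ≤ q * W := by
    rw [hsum] at hCS
    simpa using hCS
  have hqW : q ≤ W := by
    by_contra h
    push_neg at h
    have hq0' : 0 < q := lt_of_le_of_lt hW0 h
    have hp := mul_lt_mul_of_pos_left h hq0'
    linarith [hCS', hp]
  have hN₂W : N₂ ≤ 2 * W := by
    have h1 := hRIP' e₂
    rw [← hq] at h1
    rw [← hN₂] at h1
    have hp : δ * N₂ ≤ 1 / 2 * N₂ := mul_le_mul_of_nonneg_right hδ hN₂0
    linarith [h1, hqW]
  -- noise bound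
  have hWn : W ≤ n * (lam ^ 2 / normA ^ 2) := by
    have hj : ∀ j, (w j) ^ 2 ≤ lam ^ 2 / normA ^ 2 := by
      intro j
      have h1 : (w j) ^ 2 ≤ (lam / normA) ^ 2 := by
        rw [← sq_abs]
        exact pow_le_pow_left₀ (abs_nonneg _) (hw j) 2
      rwa [div_pow] at h1
    calc W ≤ ∑ _j : Fin n, lam ^ 2 / normA ^ 2 := Finset.sum_le_sum fun j _ => hj j
      _ = n * (lam ^ 2 / normA ^ 2) := by
        rw [Finset.sum_const, Finset.card_univ, Fintype.card_fin, nsmul_eq_mul]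
  -- combine
  have hfinal : ∑ i : T, (x (i : Fin m) - xhat i) ^ 2 ≤ 2 * N₁ + 2 * N₂ := by
    calc ∑ i : T, (x (i : Fin m) - xhat i) ^ 2
        = ∑ i : T, (e₁ i + e₂ i) ^ 2 := Finset.sum_congr rfl fun i _ => by rw [herr i]
      _ ≤ ∑ i : T, (2 * (e₁ i) ^ 2 + 2 * (e₂ i) ^ 2) :=
          Finset.sum_le_sum fun i _ => by linarith [sq_nonneg (e₁ i - e₂ i), sq_nonneg (e₁ i + e₂ i)]
      _ = 2 * N₁ + 2 * N₂ := by
          rw [Finset.sum_add_distrib, ← Finset.mul_sum, ← Finset.mul_sum]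
  have hcast : 4 * (n : ℝ) * lam ^ 2 / normA ^ 2 = 4 * ((n : ℝ) * (lam ^ 2 / normA ^ 2)) := by
    ring
  rw [hcast]
  linarith [hN₁D, hN₂W, hWn, hfinal]
end

section
/- Under the hypotheses that |T̃_det| ≤ S_T ≤ S_*, |Δ̃_det| ≤ S_Δ, ||w||_∞ ≤ λ/||A||_1, and α_del^2 ≥ 4nλ^2/||A||_1^2 + 8 θ_{S_T,S_Δ}^2 |Δ̃_det| ||x_{Δ̃_det}||_∞^2, every index i ∈ T̃_det with x_i = 0 satisfies |x̂_i| ≤ α_del for the least-squares estimate x̂ computed on T̃_det, and is therefore deleted by thresholding at α_del. -/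
/-!
Write `e = x̂ - x_T`. Since `y = A_T x_T + (A_Δ x_Δ + w)`, the normal equations give
`A_Tᵀ A_T e = A_Tᵀ (A_Δ x_Δ + w)`, hence
`‖A_T e‖² = ⟨e, A_Tᵀ A_Δ x_Δ⟩ + ⟨A_T e, w⟩ ≤ θ ‖e‖ ‖x_Δ‖ + ‖w‖ ‖A_T e‖`.
As `δ < 1/2`, the restricted isometry bound gives `‖e‖² ≤ 2 ‖A_T e‖²`, and the two inequalities
together force `‖e‖² ≤ 4 ‖w‖² + 8 θ² ‖x_Δ‖² ≤ α_del²`. At a zero coefficient `x̂_i = e_i`.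
-/

open Matrix

theorem sum_univ_eq_sum_coe_sort_of_support {κ M : Type*} [Fintype κ] [AddCommMonoid M]
    (S : Finset κ) {f : κ → M} (hf : ∀ i ∉ S, f i = 0) : ∑ i, f i = ∑ i : S, f i := by
  rw [Finset.sum_coe_sort]
  exact (Finset.sum_subset (Finset.subset_univ S) fun i _ hi => hf i hi).symm

theorem abs_le_sqrt_sum_sq {ι : Type*} [Fintype ι] (v : ι → ℝ) (i : ι) :
    |v i| ≤ √(∑ k, v k ^ 2) :=
  Real.abs_le_sqrt <| Finset.single_le_sum (fun k _ => sq_nonneg (v k)) (Finset.mem_univ i)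

theorem sq_sqrt_sum_sq {ι : Type*} [Fintype ι] (v : ι → ℝ) :
    √(∑ k, v k ^ 2) ^ 2 = ∑ k, v k ^ 2 :=
  Real.sq_sqrt (Finset.sum_nonneg fun k _ => sq_nonneg (v k))

theorem sum_sq_le_card_mul_sq {ι : Type*} [Fintype ι] {v : ι → ℝ} {b : ℝ} (hv : ∀ i, |v i| ≤ b) :
    ∑ i, v i ^ 2 ≤ Fintype.card ι * b ^ 2 := by
  calc ∑ i, v i ^ 2 ≤ ∑ _i : ι, b ^ 2 :=
        Finset.sum_le_sum fun i _ => sq_le_sq' (abs_le.mp (hv i)).1 (abs_le.mp (hv i)).2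
    _ = Fintype.card ι * b ^ 2 := by simp

theorem sq_le_of_sq_le_mul_add_mul {p q r s θ : ℝ} (hpq : p ^ 2 ≤ 2 * q ^ 2)
    (h : q ^ 2 ≤ θ * p * s + r * q) : p ^ 2 ≤ 4 * r ^ 2 + 8 * θ ^ 2 * s ^ 2 := by
  nlinarith [sq_nonneg (p - 4 * θ * s), sq_nonneg (2 * r - q)]

section LeastSquares

variable {ι τ : Type*} [Fintype ι] [Fintype τ]

theorem dotProduct_transpose_mul_self_mulVec (B : Matrix ι τ ℝ) (c : τ → ℝ) :
    c ⬝ᵥ (Bᵀ * B) *ᵥ c = ∑ j, (B *ᵥ c) j ^ 2 := by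
  rw [← mulVec_mulVec, dotProduct_mulVec, vecMul_transpose]
  simp only [dotProduct, sq]

theorem isUnit_transpose_mul_self_of_lower_bound [DecidableEq τ] (B : Matrix ι τ ℝ) {a : ℝ}
    (ha : 0 < a) (h : ∀ c, a * ∑ i, c i ^ 2 ≤ ∑ j, (B *ᵥ c) j ^ 2) : IsUnit (Bᵀ * B) := by
  rw [← mulVec_injective_iff_isUnit, ← coe_mulVecLin, ← LinearMap.ker_eq_bot,
    LinearMap.ker_eq_bot']
  intro c hc
  have hBc : ∑ j, (B *ᵥ c) j ^ 2 = 0 := by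
    rw [← dotProduct_transpose_mul_self_mulVec, ← mulVecLin_apply, hc, dotProduct_zero]
  have : ∑ i, c i ^ 2 = 0 :=
    le_antisymm (by nlinarith [h c, hBc]) (Finset.sum_nonneg fun i _ => sq_nonneg (c i))
  ext i
  simpa using (Finset.sum_eq_zero_iff_of_nonneg fun i _ => sq_nonneg (c i)).mp this i

theorem transpose_mul_self_mulVec_leastSquares_sub [DecidableEq τ] (B : Matrix ι τ ℝ)
    (hB : IsUnit (Bᵀ * B)) (z : τ → ℝ) (r : ι → ℝ) :
    (Bᵀ * B) *ᵥ ((Bᵀ * B)⁻¹ *ᵥ (Bᵀ *ᵥ (B *ᵥ z + r)) - z) = Bᵀ *ᵥ r := by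
  rw [mulVec_sub, mulVec_mulVec, mul_nonsing_inv _ ((isUnit_iff_isUnit_det _).mp hB),
    one_mulVec, mulVec_add, mulVec_mulVec, add_sub_cancel_left]

theorem sum_sq_leastSquares_sub_le {σ : Type*} [Fintype σ] [DecidableEq τ] (B : Matrix ι τ ℝ)
    (C : Matrix ι σ ℝ) {δ θ : ℝ} (hδ : δ < 1 / 2)
    (hB : ∀ c, (1 - δ) * ∑ k, c k ^ 2 ≤ ∑ j, (B *ᵥ c) j ^ 2) (z : τ → ℝ) (u : σ → ℝ)
    (w : ι → ℝ) (hBC : ∀ c, |c ⬝ᵥ (Bᵀ * C) *ᵥ u| ≤ θ * √(∑ k, c k ^ 2) * √(∑ k, u k ^ 2)) :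
    ∑ k, ((Bᵀ * B)⁻¹ *ᵥ (Bᵀ *ᵥ (B *ᵥ z + (C *ᵥ u + w))) - z) k ^ 2
      ≤ 4 * ∑ j, w j ^ 2 + 8 * θ ^ 2 * ∑ k, u k ^ 2 := by
  have hinv := isUnit_transpose_mul_self_of_lower_bound B (by linarith) hB
  have he := transpose_mul_self_mulVec_leastSquares_sub B hinv z (C *ᵥ u + w)
  set e := (Bᵀ * B)⁻¹ *ᵥ (Bᵀ *ᵥ (B *ᵥ z + (C *ᵥ u + w))) - z
  have hq : √(∑ j, (B *ᵥ e) j ^ 2) ^ 2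
      ≤ θ * √(∑ k, e k ^ 2) * √(∑ k, u k ^ 2) + √(∑ j, w j ^ 2) * √(∑ j, (B *ᵥ e) j ^ 2) :=
    calc √(∑ j, (B *ᵥ e) j ^ 2) ^ 2 = e ⬝ᵥ (Bᵀ * C) *ᵥ u + (B *ᵥ e) ⬝ᵥ w := by
          rw [sq_sqrt_sum_sq, ← dotProduct_transpose_mul_self_mulVec, he, mulVec_add,
            dotProduct_add, mulVec_mulVec, dotProduct_mulVec e Bᵀ w, vecMul_transpose]
      _ ≤ _ := add_le_add ((le_abs_self _).trans (hBC e))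
          ((Real.sum_mul_le_sqrt_mul_sqrt _ _ _).trans_eq (mul_comm _ _))
  have hpq : √(∑ k, e k ^ 2) ^ 2 ≤ 2 * √(∑ j, (B *ᵥ e) j ^ 2) ^ 2 := by
    rw [sq_sqrt_sum_sq, sq_sqrt_sum_sq]
    nlinarith [hB e, Finset.sum_nonneg fun k (_ : k ∈ Finset.univ) => sq_nonneg (e k)]
  simpa only [sq_sqrt_sum_sq] using sq_le_of_sq_le_mul_add_mul hpq hq

end LeastSquares

section Submatrix

variable {ι κ : Type*} [Fintype κ] (A : Matrix ι κ ℝ)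

theorem mulVec_eq_submatrix_mulVec_of_support (S : Finset κ) {x : κ → ℝ}
    (hx : ∀ i, x i ≠ 0 → i ∈ S) : A *ᵥ x = A.submatrix id ((↑) : S → κ) *ᵥ (fun i => x i) :=
  funext fun j => sum_univ_eq_sum_coe_sort_of_support S fun i hi => by
    rw [not_imp_comm.mp (hx i) hi, mul_zero]

theorem mulVec_eq_add_of_support_subset_union [DecidableEq κ] {S T : Finset κ}
    (hST : Disjoint S T) {x : κ → ℝ} (hx : ∀ i, x i ≠ 0 → i ∈ S ∪ T) :
    A *ᵥ x = A.submatrix id ((↑) : S → κ) *ᵥ (fun i => x i)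
      + A.submatrix id ((↑) : T → κ) *ᵥ (fun i => x i) := by
  ext j
  rw [mulVec_eq_submatrix_mulVec_of_support A _ hx]
  simp only [mulVec, dotProduct, submatrix_apply, id, Pi.add_apply]
  rw [Finset.sum_coe_sort (S ∪ T) (fun i => A j i * x i),
    Finset.sum_coe_sort S (fun i => A j i * x i), Finset.sum_coe_sort T (fun i => A j i * x i),
    Finset.sum_union hST]

theorem mul_sum_sq_le_sum_sq_submatrix_mulVec [Fintype ι] (S : Finset κ) {a : ℝ}
    (h : ∀ c : κ → ℝ, (∀ i, c i ≠ 0 → i ∈ S) → a * ∑ i, c i ^ 2 ≤ ∑ j, (A *ᵥ c) j ^ 2)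
    (c : S → ℝ) : a * ∑ i, c i ^ 2 ≤ ∑ j, (A.submatrix id ((↑) : S → κ) *ᵥ c) j ^ 2 := by
  classical
  set x : κ → ℝ := fun i => if hi : i ∈ S then c ⟨i, hi⟩ else 0
  have hx : ∀ i, x i ≠ 0 → i ∈ S := fun i hi => by_contra fun hS => hi (dif_neg hS)
  have hxc : ∀ i : S, x i = c i := fun i => dif_pos i.2
  have hsq : ∑ i, x i ^ 2 = ∑ i : S, x i ^ 2 :=
    sum_univ_eq_sum_coe_sort_of_support S fun i hi => by simp [x, hi]
  simpa only [hsq, mulVec_eq_submatrix_mulVec_of_support A S hx, hxc] using h x hx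

end Submatrix

theorem stmt_17_general {n m : ℕ} (A : Matrix (Fin n) (Fin m) ℝ)
    (Tdet Δdet : Finset (Fin m)) (hdisj : Disjoint Tdet Δdet)
    (ST SΔ : ℕ) (hTcard : Tdet.card ≤ ST) (hΔcard : Δdet.card ≤ SΔ)
    (x : Fin m → ℝ) (hxsupp : ∀ i, x i ≠ 0 → i ∈ Tdet ∪ Δdet)
    (w y : Fin n → ℝ) (hy : y = fun j => (∑ i, A j i * x i) + w j)
    (normA lam δ θ αdel binf : ℝ)
    (hδ : δ < 1 / 2) (hαdel0 : 0 ≤ αdel)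
    -- δ bounds the restricted isometry constant of order S_T (so ST ≤ S_*)
    (hRIP : ∀ T : Finset (Fin m), T.card ≤ ST → ∀ c : Fin m → ℝ,
      (∀ i, c i ≠ 0 → i ∈ T) →
      (1 - δ) * ∑ i, (c i) ^ 2 ≤ ∑ j, (∑ i, A j i * c i) ^ 2 ∧
      ∑ j, (∑ i, A j i * c i) ^ 2 ≤ (1 + δ) * ∑ i, (c i) ^ 2)
    -- θ bounds the restricted orthogonality constant θ_{S_T,S_Δ}
    (hRO : ∀ T₁ T₂ : Finset (Fin m), Disjoint T₁ T₂ → T₁.card ≤ ST → T₂.card ≤ SΔ →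
      ∀ (c₁ : T₁ → ℝ) (c₂ : T₂ → ℝ),
      |∑ i : T₁, c₁ i * ∑ kk : T₂, (∑ j, A j (i : Fin m) * A j (kk : Fin m)) * c₂ kk|
        ≤ θ * Real.sqrt (∑ i, (c₁ i) ^ 2) * Real.sqrt (∑ kk, (c₂ kk) ^ 2))
    (hw : ∀ j, |w j| ≤ lam / normA)
    (hbinf : ∀ i ∈ Δdet, |x i| ≤ binf)
    (hαdel : αdel ^ 2 ≥ 4 * n * lam ^ 2 / normA ^ 2
      + 8 * θ ^ 2 * Δdet.card * binf ^ 2)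
    (xhat : Tdet → ℝ)
    (hxhat : xhat = (Matrix.of (fun i kk : Tdet => ∑ j, A j (i : Fin m) * A j (kk : Fin m)))⁻¹.mulVec
      (fun i : Tdet => ∑ j, A j (i : Fin m) * y j)) :
    ∀ i : Tdet, x (i : Fin m) = 0 → |xhat i| ≤ αdel := by
  intro i hxi
  set B := A.submatrix id ((↑) : Tdet → Fin m)
  set C := A.submatrix id ((↑) : Δdet → Fin m)
  set xT : Tdet → ℝ := fun k => x k
  set xΔ : Δdet → ℝ := fun k => x k
  have hy' : y = B *ᵥ xT + (C *ᵥ xΔ + w) := by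
    rw [hy, ← add_assoc, ← mulVec_eq_add_of_support_subset_union A hdisj hxsupp]
    rfl
  have hxhat' : xhat = (Bᵀ * B)⁻¹ *ᵥ (Bᵀ *ᵥ (B *ᵥ xT + (C *ᵥ xΔ + w))) := hy' ▸ hxhat
  have he := sum_sq_leastSquares_sub_le B C hδ
    (mul_sum_sq_le_sum_sq_submatrix_mulVec A Tdet fun c hc => (hRIP Tdet hTcard c hc).1)
    xT xΔ w (hRO Tdet Δdet hdisj hTcard hΔcard · xΔ)
  rw [← hxhat'] at he
  have hw2 : ∑ j, w j ^ 2 ≤ n * (lam / normA) ^ 2 := by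
    simpa using sum_sq_le_card_mul_sq hw
  have hxΔ2 : ∑ k, xΔ k ^ 2 ≤ Δdet.card * binf ^ 2 := by
    simpa using sum_sq_le_card_mul_sq (v := xΔ) fun k => hbinf k k.2
  calc |xhat i| = |(xhat - xT) i| := by simp [xT, hxi]
    _ ≤ √(∑ k, (xhat - xT) k ^ 2) := abs_le_sqrt_sum_sq _ i
    _ ≤ αdel := Real.sqrt_le_iff.mpr ⟨hαdel0, by
      calc _ ≤ 4 * ∑ j, w j ^ 2 + 8 * θ ^ 2 * ∑ k, xΔ k ^ 2 := he
        _ ≤ 4 * (n * (lam / normA) ^ 2) + 8 * θ ^ 2 * (Δdet.card * binf ^ 2) := by gcongr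
        _ = 4 * n * lam ^ 2 / normA ^ 2 + 8 * θ ^ 2 * Δdet.card * binf ^ 2 := by ring
        _ ≤ αdel ^ 2 := hαdel⟩

/-- Deletion condition (Lemma 3): under the stated conditions, every zero coefficient
in the detected set is deleted by thresholding the LS estimate at α_del. -/
theorem stmt_17 {n m : ℕ} (A : Matrix (Fin n) (Fin m) ℝ)
    (Tdet Δdet : Finset (Fin m)) (hdisj : Disjoint Tdet Δdet)
    (ST SΔ : ℕ) (hTcard : Tdet.card ≤ ST) (hΔcard : Δdet.card ≤ SΔ)
    (x : Fin m → ℝ) (hxsupp : ∀ i, x i ≠ 0 → i ∈ Tdet ∪ Δdet)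
    (w y : Fin n → ℝ) (hy : y = fun j => (∑ i, A j i * x i) + w j)
    (normA lam δ θ αdel binf : ℝ)
    (hnormA : 0 < normA) (hlam : 0 ≤ lam) (hθ : 0 ≤ θ) (hδ0 : 0 ≤ δ)
    (hδ : δ < 1 / 2) (hαdel0 : 0 ≤ αdel)
    -- δ bounds the restricted isometry constant of order S_T (so ST ≤ S_*)
    (hRIP : ∀ T : Finset (Fin m), T.card ≤ ST → ∀ c : Fin m → ℝ,
      (∀ i, c i ≠ 0 → i ∈ T) →
      (1 - δ) * ∑ i, (c i) ^ 2 ≤ ∑ j, (∑ i, A j i * c i) ^ 2 ∧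
      ∑ j, (∑ i, A j i * c i) ^ 2 ≤ (1 + δ) * ∑ i, (c i) ^ 2)
    -- θ bounds the restricted orthogonality constant θ_{S_T,S_Δ}
    (hRO : ∀ T₁ T₂ : Finset (Fin m), Disjoint T₁ T₂ → T₁.card ≤ ST → T₂.card ≤ SΔ →
      ∀ (c₁ : T₁ → ℝ) (c₂ : T₂ → ℝ),
      |∑ i : T₁, c₁ i * ∑ kk : T₂, (∑ j, A j (i : Fin m) * A j (kk : Fin m)) * c₂ kk|
        ≤ θ * Real.sqrt (∑ i, (c₁ i) ^ 2) * Real.sqrt (∑ kk, (c₂ kk) ^ 2))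
    (hw : ∀ j, |w j| ≤ lam / normA)
    (hbinf : ∀ i ∈ Δdet, |x i| ≤ binf)
    (hαdel : αdel ^ 2 ≥ 4 * n * lam ^ 2 / normA ^ 2
      + 8 * θ ^ 2 * Δdet.card * binf ^ 2)
    (xhat : Tdet → ℝ)
    (hxhat : xhat = (Matrix.of (fun i kk : Tdet => ∑ j, A j (i : Fin m) * A j (kk : Fin m)))⁻¹.mulVec
      (fun i : Tdet => ∑ j, A j (i : Fin m) * y j)) :
    ∀ i : Tdet, x (i : Fin m) = 0 → |xhat i| ≤ αdel :=
  stmt_17_general A Tdet Δdet hdisj ST SΔ hTcard hΔcard x hxsupp w y hy normA lam δ θ αdel binf hδ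
    hαdel0 hRIP hRO hw hbinf hαdel xhat hxhat
end
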